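/- If the stability support of (y,A) is positive (i.e. every sufficiently small perturbation of (y,A) yields LASSO solutions with the same support), then the unconstrained LASSO problem with input (y,A) has exactly one minimiser. -/

import Mathlib

open Matrix BigOperators

noncomputable def lassoObj {m N : ℕ} (lam : ℝ) (y : Fin m → ℝ)
    (A : Matrix (Fin m) (Fin N) ℝ) (x : Fin N → ℝ) : ℝ :=
  (∑ i, (A.mulVec x i - y i) ^ 2) + lam * ∑ j, |x j|

def lassoSol {m N : ℕ} (lam : ℝ) (y : Fin m → ℝ)
    (A : Matrix (Fin m) (Fin N) ℝ) : Set (Fin N → ℝ) :=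
  {x | ∀ z, lassoObj lam y A x ≤ lassoObj lam y A z}

/-- The stability support: the distance to support change. -/
noncomputable def stsp {m N : ℕ} (lam : ℝ) (y : Fin m → ℝ)
    (A : Matrix (Fin m) (Fin N) ℝ) : ℝ :=
  sInf {δ : ℝ | 0 ≤ δ ∧
    ∃ (yt : Fin m → ℝ) (At : Matrix (Fin m) (Fin N) ℝ)
      (x xt : Fin N → ℝ), x ∈ lassoSol lam y A ∧ xt ∈ lassoSol lam yt At ∧
      (∀ i, |yt i - y i| ≤ δ) ∧ (∀ i j, |A i j - At i j| ≤ δ) ∧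
      Function.support x ≠ Function.support xt}

/-!
A positive stability support gives a minimiser, and forbids two minimisers with different
supports (take the unperturbed data, `δ = 0`). Strict convexity of the quadratic term forces all
minimisers to have the same image under `A`, so if `x ≠ x'` are minimisers then `d = x' - x` lies in
the kernel of `A`, and along the line `x + t • d` the objective is `lam` times the `ℓ¹` norm up to a
constant. As `d` vanishes off the support of `x`, that norm is affine in `t` on an interval around
`0` ending where a first coordinate reaches `0`. Minimality of `x` on both sides of `0` forces the
slope to vanish, so the endpoint is again a minimiser, with a smaller support.
-/

lemma abs_add_eq_abs_add_sign_mul {a b : ℝ} (h : |b| ≤ |a|) :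
    |a + b| = |a| + Real.sign a * b := by
  rcases lt_trichotomy a 0 with ha | rfl | ha
  · rw [Real.sign_of_neg ha, abs_of_neg ha] at *
    rw [abs_of_nonpos (by linarith [le_abs_self b])]
    ring
  · simp_all
  · rw [Real.sign_of_pos ha, abs_of_pos ha] at *
    rw [abs_of_nonneg (by linarith [neg_abs_le b])]
    ring

lemma sum_abs_add_smul_eq {ι : Type*} [Fintype ι] {x d : ι → ℝ} {t : ℝ}
    (h : ∀ j, |t| * |d j| ≤ |x j|) :
    ∑ j, |(x + t • d) j| = ∑ j, |x j| + t * ∑ j, Real.sign (x j) * d j := by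
  rw [Finset.mul_sum, ← Finset.sum_add_distrib]
  refine Finset.sum_congr rfl fun j _ => ?_
  rw [Pi.add_apply, Pi.smul_apply, smul_eq_mul,
    abs_add_eq_abs_add_sign_mul (by rw [abs_mul]; exact h j)]
  ring

/-- The first time `τ` at which a coordinate of `x + τ • d` reaches `0`, on whichever side of `0`
that happens. -/
lemma exists_abs_mul_le_and_add_mul_eq_zero {ι : Type*} [Fintype ι] {x d : ι → ℝ}
    (hd : d ≠ 0) (hsupp : Function.support d ⊆ Function.support x) :
    ∃ τ : ℝ, (∀ k, |τ| * |d k| ≤ |x k|) ∧ ∃ j, x j ≠ 0 ∧ x j + τ * d j = 0 := by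
  classical
  have hne : (Finset.univ.filter fun k => d k ≠ 0).Nonempty := by
    obtain ⟨k, hk⟩ := Function.ne_iff.mp hd
    exact ⟨k, Finset.mem_filter.mpr ⟨Finset.mem_univ k, hk⟩⟩
  obtain ⟨j, hj, hmin⟩ := Finset.exists_min_image _ (fun k => |x k / d k|) hne
  have hdj : d j ≠ 0 := (Finset.mem_filter.mp hj).2
  have hxj : x j ≠ 0 := hsupp hdj
  refine ⟨-(x j / d j), fun k => ?_, j, hxj, by field_simp; ring⟩
  by_cases hdk : d k = 0
  · simp [hdk]
  · have hk := hmin k (Finset.mem_filter.mpr ⟨Finset.mem_univ k, hdk⟩)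
    rw [abs_neg]
    calc |x j / d j| * |d k| ≤ |x k / d k| * |d k| := by gcongr
      _ = |x k| := by rw [abs_div, div_mul_cancel₀ _ (abs_ne_zero.mpr hdk)]

section Lasso

variable {m N : ℕ} {lam : ℝ} {y : Fin m → ℝ} {A : Matrix (Fin m) (Fin N) ℝ}

lemma lassoObj_midpoint_add_le (hlam : 0 ≤ lam) (x x' : Fin N → ℝ) :
    lassoObj lam y A ((2⁻¹ : ℝ) • (x + x')) + (∑ i, ((A *ᵥ x) i - (A *ᵥ x') i) ^ 2) / 4
      ≤ (lassoObj lam y A x + lassoObj lam y A x') / 2 := by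
  have hquad : ∀ i, ((A *ᵥ ((2⁻¹ : ℝ) • (x + x'))) i - y i) ^ 2
      + ((A *ᵥ x) i - (A *ᵥ x') i) ^ 2 / 4
      = (((A *ᵥ x) i - y i) ^ 2 + ((A *ᵥ x') i - y i) ^ 2) / 2 := fun i => by
    simp only [mulVec_smul, mulVec_add, Pi.smul_apply, Pi.add_apply, smul_eq_mul]
    ring
  have hl1 : ∑ j, |((2⁻¹ : ℝ) • (x + x')) j| ≤ (∑ j, |x j| + ∑ j, |x' j|) / 2 := by
    rw [← Finset.sum_add_distrib, Finset.sum_div]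
    refine Finset.sum_le_sum fun j _ => ?_
    simp only [Pi.smul_apply, Pi.add_apply, smul_eq_mul, abs_mul, abs_inv, abs_two]
    linarith [abs_add_le (x j) (x' j)]
  have hsum := Finset.sum_congr rfl fun i (_ : i ∈ Finset.univ) => hquad i
  rw [Finset.sum_add_distrib, ← Finset.sum_div, ← Finset.sum_div, Finset.sum_add_distrib] at hsum
  unfold lassoObj
  nlinarith [mul_le_mul_of_nonneg_left hl1 hlam]

lemma mulVec_eq_of_mem_lassoSol (hlam : 0 ≤ lam) {x x' : Fin N → ℝ}
    (hx : x ∈ lassoSol lam y A) (hx' : x' ∈ lassoSol lam y A) : A *ᵥ x = A *ᵥ x' := by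
  have hmid := lassoObj_midpoint_add_le (y := y) (A := A) hlam x x'
  have hsq : ∑ i, ((A *ᵥ x) i - (A *ᵥ x') i) ^ 2 = 0 :=
    le_antisymm (by linarith [hx ((2⁻¹ : ℝ) • (x + x')), hx x', hx' x])
      (Finset.sum_nonneg fun i _ => sq_nonneg _)
  funext i
  have := (Finset.sum_eq_zero_iff_of_nonneg fun i _ => sq_nonneg _).mp hsq i (Finset.mem_univ i)
  exact sub_eq_zero.mp (pow_eq_zero_iff two_ne_zero |>.mp this)

lemma lassoObj_add_of_mulVec_eq_zero {x d : Fin N → ℝ} (hd : A *ᵥ d = 0) :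
    lassoObj lam y A (x + d) = lassoObj lam y A x + lam * (∑ j, |(x + d) j| - ∑ j, |x j|) := by
  simp only [lassoObj, mulVec_add, hd, add_zero]
  ring

lemma add_smul_mem_lassoSol {x d : Fin N → ℝ} {τ : ℝ}
    (hx : x ∈ lassoSol lam y A) (hd : A *ᵥ d = 0)
    (hstep : ∀ k, |τ| * |d k| ≤ |x k|) : x + τ • d ∈ lassoSol lam y A := by
  set c := ∑ j, Real.sign (x j) * d j
  have hobj : ∀ t, |t| = |τ| →
      lassoObj lam y A (x + t • d) = lassoObj lam y A x + lam * (t * c) := fun t ht => by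
    rw [lassoObj_add_of_mulVec_eq_zero (by rw [mulVec_smul, hd, smul_zero]),
      sum_abs_add_smul_eq (by rw [ht]; exact hstep)]
    ring
  have hpos := hx (x + τ • d)
  have hneg := hx (x + (-τ) • d)
  rw [hobj τ rfl] at hpos
  rw [hobj (-τ) (abs_neg τ)] at hneg
  have hslope : lam * (τ * c) = 0 := by nlinarith
  intro z
  rw [hobj τ rfl, hslope, add_zero]
  exact hx z

lemma lassoSol_subsingleton_of_support_eq (hlam : 0 ≤ lam)
    (hsupp : ∀ x ∈ lassoSol lam y A, ∀ x' ∈ lassoSol lam y A,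
      Function.support x = Function.support x') :
    (lassoSol lam y A).Subsingleton := by
  intro x hx x' hx'
  by_contra hne
  have hker : A *ᵥ (x' - x) = 0 := by
    rw [mulVec_sub, mulVec_eq_of_mem_lassoSol hlam hx' hx, sub_self]
  have hdsupp : Function.support (x' - x) ⊆ Function.support x := fun j hj hxj => by
    have hx'j : x' j = 0 := by
      rwa [← Function.notMem_support, ← hsupp x hx x' hx', Function.notMem_support]
    exact hj (by simp [hxj, hx'j])
  obtain ⟨τ, hstep, j, hxj, hzj⟩ :=
    exists_abs_mul_le_and_add_mul_eq_zero (sub_ne_zero.mpr (Ne.symm hne)) hdsupp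
  have hz := add_smul_mem_lassoSol hx hker hstep
  have hj : j ∈ Function.support (x + τ • (x' - x)) := hsupp x hx _ hz ▸ hxj
  exact hj (by simpa using hzj)

lemma lassoSol_nonempty_of_stsp_pos (h : 0 < stsp lam y A) : (lassoSol lam y A).Nonempty := by
  have hne : ∀ S : Set ℝ, 0 < sInf S → S.Nonempty := fun S hS =>
    Set.nonempty_iff_ne_empty.mpr fun he => by simp [he] at hS
  obtain ⟨δ, -, -, -, x, -, hx, -⟩ := hne _ h
  exact ⟨x, hx⟩

lemma support_eq_of_stsp_pos (h : 0 < stsp lam y A) :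
    ∀ x ∈ lassoSol lam y A, ∀ x' ∈ lassoSol lam y A,
      Function.support x = Function.support x' := by
  intro x hx x' hx'
  by_contra hne
  exact h.not_ge <| csInf_le ⟨0, fun δ hδ => hδ.1⟩
    ⟨le_rfl, y, A, x, x', hx, hx', by simp, by simp, hne⟩

end Lasso

/-- If the stability support is positive then the LASSO problem has exactly one
minimiser. -/
theorem lasso_pos_stsp_unique_minimiser {m N : ℕ} (lam : ℝ) (hlam : 0 < lam)
    (y : Fin m → ℝ) (A : Matrix (Fin m) (Fin N) ℝ)
    (h : 0 < stsp lam y A) :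
    ∃ x : Fin N → ℝ, lassoSol lam y A = {x} := by
  obtain ⟨x, hx⟩ := lassoSol_nonempty_of_stsp_pos h
  have hsub := lassoSol_subsingleton_of_support_eq hlam.le (support_eq_of_stsp_pos h)
  exact ⟨x, hsub.eq_singleton_of_mem hx⟩
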